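/- Let H and H' be tokenizations over an alphabet α such that every token of H and every token of H' is nonempty and H.flatten = H'.flatten. If no index of H is an SIT (i.e., the interval of every token of H equals the interval of some token of H'), then H = H'. -/
import Mathlib


/-- The interval of the `i`-th token of a tokenization `H`. -/
def itv {α : Type*} (H : List (List α)) (i : ℕ) : ℕ × ℕ :=
  (((H.take i).map List.length).sum,
   ((H.take i).map List.length).sum + (H.getD i []).length)

lemma itv_cons_succ {α : Type*} (t : List α) (T : List (List α)) (i : ℕ) :
    itv (t :: T) (i+1) = (t.length + (itv T i).1, t.length + (itv T i).2) := by
  simp [itv, Nat.add_assoc]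

lemma itv_cons_zero {α : Type*} (t : List α) (T : List (List α)) :
    itv (t :: T) 0 = (0, t.length) := by
  simp [itv]

/-- If all tokens of `H` and `H'` are nonempty, `H.flatten = H'.flatten`, and no
index of `H` is an SIT (every interval of a token of `H` equals the interval of
some token of `H'`), then `H = H'`. -/
theorem eq_of_no_sit {α : Type*} (H H' : List (List α))
    (hH : ∀ t ∈ H, t ≠ []) (hH' : ∀ t ∈ H', t ≠ [])
    (hflat : H.flatten = H'.flatten)
    (h : ∀ i, i < H.length → ∃ j, j < H'.length ∧ itv H i = itv H' j) :
    H = H' := by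
  induction H generalizing H' with
  | nil =>
    cases H' with
    | nil => rfl
    | cons t' T' =>
      exfalso
      have : t' ++ T'.flatten = [] := by simpa using hflat.symm
      exact hH' t' (by simp) (List.append_eq_nil_iff.mp this).1
  | cons t T ih =>
    cases H' with
    | nil =>
      exfalso
      have : t ++ T.flatten = [] := by simpa using hflat
      exact hH t (by simp) (List.append_eq_nil_iff.mp this).1
    | cons t' T' =>
      obtain ⟨j, hj, hitv⟩ := h 0 (by simp)
      have hj0 : j = 0 := by
        rcases j with _ | k
        · rfl
        · exfalso
          have h1 : (itv (t :: T) 0).1 = 0 := by rw [itv_cons_zero]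
          have h2 : (itv (t' :: T') (k+1)).1 = t'.length + (itv T' k).1 := by
            rw [itv_cons_succ]
          have ht' : t'.length ≠ 0 := by
            simpa using hH' t' (by simp)
          have := congrArg Prod.fst hitv
          rw [h1, h2] at this
          omega
      subst hj0
      rw [itv_cons_zero, itv_cons_zero] at hitv
      have hlen : t.length = t'.length := by
        have := congrArg Prod.snd hitv
        simpa using this
      have hfl : t ++ T.flatten = t' ++ T'.flatten := by simpa using hflat
      obtain ⟨ht, hT⟩ := List.append_inj hfl hlen
      subst ht
      have hrest : T = T' := by
        apply ih T' (fun s hs => hH s (List.mem_cons_of_mem _ hs)) (fun s hs => hH' s (List.mem_cons_of_mem _ hs)) hT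
        intro i hi
        obtain ⟨j, hj, hij⟩ := h (i+1) (by simpa using Nat.succ_lt_succ hi)
        rcases j with _ | k
        · exfalso
          rw [itv_cons_succ, itv_cons_zero] at hij
          have h1 : t.length + (itv T i).1 = 0 := congrArg Prod.fst hij
          have ht0 : t.length ≠ 0 := by simpa using hH t (by simp)
          omega
        · refine ⟨k, by simpa using Nat.lt_of_succ_lt_succ hj, ?_⟩
          rw [itv_cons_succ, itv_cons_succ] at hij
          have h1 := congrArg Prod.fst hij
          have h2 := congrArg Prod.snd hij
          simp at h1 h2
          exact Prod.ext h1 h2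
      rw [hrest]
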